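/- arXiv:2604.20029 — 7 statements merged into one kernel-verified Lean document; each statement's English description precedes it below -/
import Mathlib

section
/- Let θ be a finite nonnegative measure on Ω with total mass at most 2, let U : Ω → ℝ be continuous with 0 ≤ U ≤ Ū, and let m > 0, δ > 0. Define the operator A on continuous functions by A(Ψ)(x) = U(x) + (1/(2mδ))·∫_Ω (max(Ψ(z) - Ψ(x), 0))^2 dθ(z). If Ψ₁, Ψ₂ are continuous with 0 ≤ Ψᵢ ≤ Ū, then ‖A(Ψ₁) - A(Ψ₂)‖_∞ ≤ (4Ū/(mδ))·‖Ψ₁ - Ψ₂‖_∞. In particular, if δ > 4Ū/m, the map A is a strict contraction on the set of continuous functions bounded between 0 and Ū. -/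
open MeasureTheory

theorem hjb_operator_contraction
    (θ : Measure (Set.Icc (0:ℝ) 1)) [IsFiniteMeasure θ]
    (hθ : θ Set.univ ≤ 2)
    (U : (Set.Icc (0:ℝ) 1) → ℝ) (hU : Continuous U)
    (Ubar m δ : ℝ) (hUbar : 0 < Ubar) (hm : 0 < m) (hδ : 0 < δ)
    (hU0 : ∀ x, 0 ≤ U x) (hU1 : ∀ x, U x ≤ Ubar)
    (Ψ₁ Ψ₂ : (Set.Icc (0:ℝ) 1) → ℝ) (hΨ₁ : Continuous Ψ₁) (hΨ₂ : Continuous Ψ₂)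
    (h10 : ∀ x, 0 ≤ Ψ₁ x) (h11 : ∀ x, Ψ₁ x ≤ Ubar)
    (h20 : ∀ x, 0 ≤ Ψ₂ x) (h21 : ∀ x, Ψ₂ x ≤ Ubar) :
    (∀ x, |(U x + (1 / (2 * m * δ)) * ∫ z, (max (Ψ₁ z - Ψ₁ x) 0) ^ 2 ∂θ) -
        (U x + (1 / (2 * m * δ)) * ∫ z, (max (Ψ₂ z - Ψ₂ x) 0) ^ 2 ∂θ)| ≤
      (4 * Ubar / (m * δ)) * ⨆ y, |Ψ₁ y - Ψ₂ y|) ∧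
    (δ > 4 * Ubar / m → 4 * Ubar / (m * δ) < 1) := by
  have hbdd : BddAbove (Set.range fun y => |Ψ₁ y - Ψ₂ y|) := by
    refine ⟨Ubar, ?_⟩
    rintro _ ⟨y, rfl⟩
    rw [abs_sub_le_iff]
    constructor <;> [linarith [h11 y, h20 y]; linarith [h21 y, h10 y]]
  set S := ⨆ y, |Ψ₁ y - Ψ₂ y| with hSdef
  have hS : ∀ x, |Ψ₁ x - Ψ₂ x| ≤ S := fun x => le_ciSup hbdd x
  have hS0 : 0 ≤ S := le_trans (abs_nonneg _) (hS ⟨0, by norm_num⟩)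
  constructor
  · intro x
    have hint₁ : Integrable (fun z => max (Ψ₁ z - Ψ₁ x) 0 ^ 2) θ :=
      integrableOn_univ.mp
        (((((hΨ₁.sub continuous_const).max continuous_const).pow 2).locallyIntegrable).integrableOn_isCompact isCompact_univ)
    have hint₂ : Integrable (fun z => max (Ψ₂ z - Ψ₂ x) 0 ^ 2) θ :=
      integrableOn_univ.mp
        (((((hΨ₂.sub continuous_const).max continuous_const).pow 2).locallyIntegrable).integrableOn_isCompact isCompact_univ)
    have key : ∀ z, ‖max (Ψ₁ z - Ψ₁ x) 0 ^ 2 - max (Ψ₂ z - Ψ₂ x) 0 ^ 2‖ ≤ 4 * Ubar * S := by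
      intro z
      set m₁ := max (Ψ₁ z - Ψ₁ x) 0 with hm₁
      set m₂ := max (Ψ₂ z - Ψ₂ x) 0 with hm₂
      have h₁0 : 0 ≤ m₁ := le_max_right _ _
      have h₂0 : 0 ≤ m₂ := le_max_right _ _
      have h₁u : m₁ ≤ Ubar := max_le (by linarith [h11 z, h10 x]) hUbar.le
      have h₂u : m₂ ≤ Ubar := max_le (by linarith [h21 z, h20 x]) hUbar.le
      have hd : |m₁ - m₂| ≤ 2 * S := by
        have := abs_max_sub_max_le_abs (Ψ₁ z - Ψ₁ x) (Ψ₂ z - Ψ₂ x) 0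
        have h2 : |(Ψ₁ z - Ψ₁ x) - (Ψ₂ z - Ψ₂ x)| ≤ |Ψ₁ z - Ψ₂ z| + |Ψ₁ x - Ψ₂ x| := by
          have := abs_sub (Ψ₁ z - Ψ₂ z) (Ψ₁ x - Ψ₂ x)
          have heq : (Ψ₁ z - Ψ₁ x) - (Ψ₂ z - Ψ₂ x) = (Ψ₁ z - Ψ₂ z) - (Ψ₁ x - Ψ₂ x) := by ring
          rw [heq]; exact abs_sub _ _
        linarith [hS z, hS x]
      have heq : m₁ ^ 2 - m₂ ^ 2 = (m₁ - m₂) * (m₁ + m₂) := by ring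
      rw [Real.norm_eq_abs, heq, abs_mul]
      have h3 : |m₁ + m₂| ≤ 2 * Ubar := by rw [abs_of_nonneg (by linarith)]; linarith
      calc |m₁ - m₂| * |m₁ + m₂| ≤ (2 * S) * (2 * Ubar) :=
            mul_le_mul hd h3 (abs_nonneg _) (by linarith)
        _ = 4 * Ubar * S := by ring
    have hI : ‖(∫ z, max (Ψ₁ z - Ψ₁ x) 0 ^ 2 ∂θ) - ∫ z, max (Ψ₂ z - Ψ₂ x) 0 ^ 2 ∂θ‖
        ≤ (4 * Ubar * S) * 2 := by
      rw [← integral_sub hint₁ hint₂]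
      have := norm_integral_le_of_norm_le_const (μ := θ)
        (f := fun z => max (Ψ₁ z - Ψ₁ x) 0 ^ 2 - max (Ψ₂ z - Ψ₂ x) 0 ^ 2)
        (C := 4 * Ubar * S) (Filter.Eventually.of_forall key)
      have htr : (θ Set.univ).toReal ≤ 2 := by
        have := ENNReal.toReal_mono (by norm_num : (2 : ENNReal) ≠ ⊤) hθ
        simpa using this
      calc _ ≤ (4 * Ubar * S) * (θ Set.univ).toReal := this
        _ ≤ (4 * Ubar * S) * 2 :=
            mul_le_mul_of_nonneg_left htr (by positivity)
    have harr : (U x + (1 / (2 * m * δ)) * ∫ z, (max (Ψ₁ z - Ψ₁ x) 0) ^ 2 ∂θ) -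
        (U x + (1 / (2 * m * δ)) * ∫ z, (max (Ψ₂ z - Ψ₂ x) 0) ^ 2 ∂θ)
        = (1 / (2 * m * δ)) * ((∫ z, max (Ψ₁ z - Ψ₁ x) 0 ^ 2 ∂θ) - ∫ z, max (Ψ₂ z - Ψ₂ x) 0 ^ 2 ∂θ) := by
      ring
    rw [harr, abs_mul, abs_of_nonneg (by positivity : (0:ℝ) ≤ 1 / (2 * m * δ))]
    rw [Real.norm_eq_abs] at hI
    calc 1 / (2 * m * δ) * |(∫ z, max (Ψ₁ z - Ψ₁ x) 0 ^ 2 ∂θ) - ∫ z, max (Ψ₂ z - Ψ₂ x) 0 ^ 2 ∂θ|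
        ≤ 1 / (2 * m * δ) * ((4 * Ubar * S) * 2) :=
          mul_le_mul_of_nonneg_left hI (by positivity)
      _ = (4 * Ubar / (m * δ)) * S := by field_simp
  · intro hgt
    rw [div_lt_one (by positivity)]
    calc 4 * Ubar = (4 * Ubar / m) * m := by field_simp
      _ < δ * m := by
          apply mul_lt_mul_of_pos_right hgt hm
      _ = m * δ := by ring
end

section
/- Let θ be a finite nonnegative measure on Ω = [0,1], let U : Ω → ℝ be continuous with 0 ≤ U ≤ Ū, and let m, δ > 0. Suppose Ψ : Ω → ℝ is continuous and satisfies Ψ(x) = U(x) + (1/(2mδ))·∫_Ω (max(Ψ(z) - Ψ(x), 0))^2 dθ(z) for all x ∈ Ω. Then 0 ≤ Ψ(x) ≤ Ū for all x ∈ Ω. -/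
open MeasureTheory

theorem hjb_fixed_point_apriori_bound
    (θ : Measure (Set.Icc (0:ℝ) 1)) [IsFiniteMeasure θ]
    (U Ψ : (Set.Icc (0:ℝ) 1) → ℝ) (hU : Continuous U) (hΨ : Continuous Ψ)
    (Ubar m δ : ℝ) (hUbar : 0 < Ubar) (hm : 0 < m) (hδ : 0 < δ)
    (hU0 : ∀ x, 0 ≤ U x) (hU1 : ∀ x, U x ≤ Ubar)
    (heq : ∀ x, Ψ x = U x + (1 / (2 * m * δ)) * ∫ z, (max (Ψ z - Ψ x) 0) ^ 2 ∂θ) :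
    ∀ x, 0 ≤ Ψ x ∧ Ψ x ≤ Ubar := by
  have hc : (0:ℝ) ≤ 1 / (2 * m * δ) := by positivity
  have hint : ∀ x, 0 ≤ ∫ z, (max (Ψ z - Ψ x) 0) ^ 2 ∂θ := fun x =>
    integral_nonneg (fun z => by positivity)
  -- maximizer
  obtain ⟨x₀, hmax⟩ := hΨ.exists_forall_ge (by simp [Filter.cocompact_eq_bot])
  have hΨx₀ : Ψ x₀ = U x₀ := by
    have h0 : (∫ z, (max (Ψ z - Ψ x₀) 0) ^ 2 ∂θ) = 0 := by
      have : ∀ z, (max (Ψ z - Ψ x₀) 0) ^ 2 = 0 := fun z => by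
        rw [max_eq_right (by linarith [hmax z])]; ring
      simp [this]
    rw [heq x₀, h0]; ring
  intro x
  refine ⟨?_, ?_⟩
  · rw [heq x]
    have := hU0 x
    nlinarith [hint x]
  · calc Ψ x ≤ Ψ x₀ := hmax x
      _ = U x₀ := hΨx₀
      _ ≤ Ubar := hU1 x₀
end

section
/- Let θ be a nonnegative measure on Ω = [0,1] with total mass at most 2, let U : Ω → ℝ be continuous with 0 ≤ U ≤ Ū, let m > 0 and δ > 4Ū/m. Then there exists a unique continuous function Ψ : Ω → ℝ with 0 ≤ Ψ ≤ Ū satisfying Ψ(x) = U(x) + (1/(2mδ))·∫_Ω (max(Ψ(z) - Ψ(x), 0))^2 θ(dz) for all x ∈ Ω. -/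
open MeasureTheory Set

/-! On functions with values in `[0, Ū]` the map `Ψ ↦ U + c ∫ (Ψ z - Ψ x)₊² dθ`, `c = 1/(2mδ)`,
is Lipschitz for the sup norm with constant `c · 4Ū · θ(Ω) ≤ 4Ū/(mδ) < 1`, because `t ↦ t₊²` is
`2Ū`-Lipschitz on `(-∞, Ū]` and `Ψ z - Ψ x` moves by at most `2‖Ψ - Φ‖`. The map sends the closed
set `{U ≤ Ψ ≤ Ū}` into itself: the excess `(Ψ z - Ψ x)₊` is at most `Ū - U x`, and `c Ū θ(Ω) ≤ 1`.
So Banach's fixed-point theorem gives a unique solution in that set, and every solution lies in it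
because the integral term is nonnegative. -/

theorem sq_posPart_sub_sq_posPart_le {a b B : ℝ} (ha : a ≤ B) (hb : b ≤ B) (hB : 0 ≤ B) :
    |max a 0 ^ 2 - max b 0 ^ 2| ≤ 2 * B * |a - b| :=
  calc |max a 0 ^ 2 - max b 0 ^ 2| = (max a 0 + max b 0) * |max a 0 - max b 0| := by
        rw [sq_sub_sq, abs_mul, abs_of_nonneg (by positivity)]
    _ ≤ 2 * B * |a - b| :=
        mul_le_mul (by linarith [max_le ha hB, max_le hb hB]) (abs_max_sub_max_le_abs a b 0)
          (abs_nonneg _) (by positivity)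

theorem existsUnique_isFixedPt_of_contracting_on {α : Type*} [MetricSpace α] [CompleteSpace α]
    {T : α → α} {s : Set α} (hs : IsClosed s) {x₀ : α} (hx₀ : x₀ ∈ s) (hT : MapsTo T s s)
    {K : ℝ} (hK : K < 1) (hlip : ∀ f ∈ s, ∀ g ∈ s, dist (T f) (T g) ≤ K * dist f g) :
    ∃! x, x ∈ s ∧ Function.IsFixedPt T x := by
  have hcontr : ContractingWith K.toNNReal (hT.restrict T s s) := by
    refine ⟨Real.toNNReal_lt_one.2 hK, LipschitzWith.of_dist_le_mul fun f g => ?_⟩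
    exact (hlip f f.2 g g.2).trans
      (mul_le_mul_of_nonneg_right (Real.le_coe_toNNReal K) dist_nonneg)
  obtain ⟨x, hxs, hfix, -⟩ :=
    hcontr.exists_fixedPoint' hs.isComplete hT hx₀ (edist_ne_top _ _)
  refine ⟨x, ⟨hxs, hfix⟩, fun y ⟨hys, hyfix⟩ => ?_⟩
  exact congrArg Subtype.val <| hcontr.fixedPoint_unique' (x := ⟨y, hys⟩) (y := ⟨x, hxs⟩)
    (Subtype.ext hyfix) (Subtype.ext hfix)

theorem isClosed_setOf_forall_mem_Icc {X : Type*} [TopologicalSpace X] (U : C(X, ℝ)) (B : ℝ) :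
    IsClosed {f : C(X, ℝ) | ∀ x, f x ∈ Icc (U x) B} := by
  rw [ofPred_forall]
  exact isClosed_iInter fun x => isClosed_Icc.preimage (continuous_eval_const x)

namespace HJB

section Measurable

variable {X : Type*} [TopologicalSpace X] [MeasurableSpace X] (μ : Measure X)

noncomputable def excessIntegral (f : C(X, ℝ)) (x : X) : ℝ := ∫ z, max (f z - f x) 0 ^ 2 ∂μ

theorem excessIntegral_nonneg (f : C(X, ℝ)) (x : X) : 0 ≤ excessIntegral μ f x :=
  integral_nonneg fun _ => sq_nonneg _

variable {μ} {B : ℝ}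

theorem excessIntegral_le [IsFiniteMeasure μ] {f : C(X, ℝ)} (hf : ∀ z, f z ∈ Icc 0 B) (x : X) :
    excessIntegral μ f x ≤ B * (B - f x) * μ.real univ := by
  have hB : 0 ≤ B := (hf x).1.trans (hf x).2
  have hpt : ∀ z, ‖max (f z - f x) 0 ^ 2‖ ≤ B * (B - f x) := by
    intro z
    have h0 : 0 ≤ max (f z - f x) 0 := le_max_right _ _
    have h1 : max (f z - f x) 0 ≤ B - f x :=
      max_le (by linarith [(hf z).2]) (by linarith [(hf x).2])
    have h2 : max (f z - f x) 0 ≤ B := max_le (by linarith [(hf z).2, (hf x).1]) hB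
    rw [Real.norm_of_nonneg (by positivity), sq]
    exact mul_le_mul h2 h1 h0 hB
  exact (le_abs_self _).trans (norm_integral_le_of_norm_le_const (.of_forall hpt))

end Measurable

variable {X : Type*} [MetricSpace X] [CompactSpace X] [MeasurableSpace X] [OpensMeasurableSpace X]
  (μ : Measure X) [IsFiniteMeasure μ]

theorem continuous_excessIntegral (f : C(X, ℝ)) : Continuous (excessIntegral μ f) := by
  unfold excessIntegral
  simpa using continuous_parametric_integral_of_continuous (μ := μ)
    (f := fun x z => max (f z - f x) 0 ^ 2) (by fun_prop) isCompact_univ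

theorem integrable_sq_posPart_sub (f : C(X, ℝ)) (x : X) :
    Integrable (fun z => max (f z - f x) 0 ^ 2) μ :=
  Continuous.integrable_of_hasCompactSupport (by fun_prop) (.of_compactSpace _)

variable {μ} {B : ℝ}

theorem abs_excessIntegral_sub_le {f g : C(X, ℝ)} (hf : ∀ z, f z ∈ Icc 0 B)
    (hg : ∀ z, g z ∈ Icc 0 B) (x : X) :
    |excessIntegral μ f x - excessIntegral μ g x| ≤ 4 * B * μ.real univ * dist f g := by
  have hB : 0 ≤ B := (hf x).1.trans (hf x).2
  have hpt : ∀ z,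
      |max (f z - f x) 0 ^ 2 - max (g z - g x) 0 ^ 2| ≤ 2 * B * (2 * dist f g) := by
    intro z
    refine (sq_posPart_sub_sq_posPart_le (by linarith [(hf z).2, (hf x).1])
      (by linarith [(hg z).2, (hg x).1]) hB).trans (mul_le_mul_of_nonneg_left ?_ (by positivity))
    calc |f z - f x - (g z - g x)| ≤ |f z - g z| + |f x - g x| := by
          rw [show f z - f x - (g z - g x) = (f z - g z) - (f x - g x) by ring]
          exact abs_sub _ _
      _ ≤ 2 * dist f g := by
          linarith [f.dist_apply_le_dist (g := g) z, f.dist_apply_le_dist (g := g) x,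
            Real.dist_eq (f z) (g z), Real.dist_eq (f x) (g x)]
  calc |excessIntegral μ f x - excessIntegral μ g x|
      = ‖∫ z, (max (f z - f x) 0 ^ 2 - max (g z - g x) 0 ^ 2) ∂μ‖ := by
        rw [integral_sub (integrable_sq_posPart_sub μ f x) (integrable_sq_posPart_sub μ g x),
          Real.norm_eq_abs, excessIntegral, excessIntegral]
    _ ≤ 2 * B * (2 * dist f g) * μ.real univ :=
        norm_integral_le_of_norm_le_const (.of_forall hpt)
    _ = 4 * B * μ.real univ * dist f g := by ring

variable (μ)

noncomputable def hjbOperator (U : C(X, ℝ)) (c : ℝ) (f : C(X, ℝ)) : C(X, ℝ) :=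
  ⟨fun x => U x + c * excessIntegral μ f x,
    U.continuous.add (continuous_const.mul (continuous_excessIntegral μ f))⟩

theorem hjbOperator_apply (U : C(X, ℝ)) (c : ℝ) (f : C(X, ℝ)) (x : X) :
    hjbOperator μ U c f x = U x + c * excessIntegral μ f x := rfl

theorem le_hjbOperator_apply (U : C(X, ℝ)) {c : ℝ} (hc : 0 ≤ c) (f : C(X, ℝ)) (x : X) :
    U x ≤ hjbOperator μ U c f x :=
  le_add_of_nonneg_right (mul_nonneg hc (excessIntegral_nonneg μ f x))

variable {μ}

theorem dist_hjbOperator_le (U : C(X, ℝ)) {c : ℝ} (hc : 0 ≤ c) (hB : 0 ≤ B) {f g : C(X, ℝ)}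
    (hf : ∀ z, f z ∈ Icc 0 B) (hg : ∀ z, g z ∈ Icc 0 B) :
    dist (hjbOperator μ U c f) (hjbOperator μ U c g) ≤ c * (4 * B * μ.real univ) * dist f g := by
  refine (ContinuousMap.dist_le (by positivity)).2 fun x => ?_
  rw [Real.dist_eq, hjbOperator_apply, hjbOperator_apply, add_sub_add_left_eq_sub, ← mul_sub,
    abs_mul, abs_of_nonneg hc, mul_assoc]
  exact mul_le_mul_of_nonneg_left (abs_excessIntegral_sub_le hf hg x) hc

theorem mapsTo_hjbOperator {U : C(X, ℝ)} (hU : ∀ x, U x ∈ Icc 0 B) {c : ℝ} (hc : 0 ≤ c)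
    (hcB : c * B * μ.real univ ≤ 1) :
    MapsTo (hjbOperator μ U c) {f | ∀ x, f x ∈ Icc (U x) B} {f | ∀ x, f x ∈ Icc (U x) B} := by
  intro f hf x
  have hB : 0 ≤ B := (hU x).1.trans (hU x).2
  have hI := excessIntegral_le (μ := μ) (fun z => ⟨(hU z).1.trans (hf z).1, (hf z).2⟩) x
  refine ⟨le_hjbOperator_apply μ U hc f x, ?_⟩
  calc hjbOperator μ U c f x ≤ U x + c * (B * (B - U x) * μ.real univ) := by
        rw [hjbOperator_apply]
        gcongr
        exact hI.trans (by gcongr; exact (hf x).1)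
    _ = U x + c * B * μ.real univ * (B - U x) := by ring
    _ ≤ U x + 1 * (B - U x) := by gcongr; linarith [(hU x).2]
    _ = B := by ring

end HJB

open HJB in
theorem hjb_unique_solution_general
    (θ : Measure (Set.Icc (0:ℝ) 1)) [IsFiniteMeasure θ]
    (hθ : θ Set.univ ≤ 2)
    (U : (Set.Icc (0:ℝ) 1) → ℝ) (hU : Continuous U)
    (Ubar m δ : ℝ) (hm : 0 < m)
    (hδ : δ > 4 * Ubar / m)
    (hU0 : ∀ x, 0 ≤ U x) (hU1 : ∀ x, U x ≤ Ubar) :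
    ∃! Ψ : C((Set.Icc (0:ℝ) 1), ℝ),
      (∀ x, 0 ≤ Ψ x ∧ Ψ x ≤ Ubar) ∧
      (∀ x, Ψ x = U x + (1 / (2 * m * δ)) * ∫ z, (max (Ψ z - Ψ x) 0) ^ 2 ∂θ) := by
  set c := 1 / (2 * m * δ) with hc_def
  have hUbar : 0 ≤ Ubar := (hU0 ⟨0, by norm_num⟩).trans (hU1 _)
  have hδ0 : 0 < δ := (by positivity : 0 ≤ 4 * Ubar / m).trans_lt hδ
  have hc : 0 ≤ c := by positivity
  have hθ2 : θ.real univ ≤ 2 := ENNReal.toReal_le_of_le_ofReal zero_le_two (by simpa using hθ)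
  have hK : c * (4 * Ubar * θ.real univ) < 1 := by
    have hmδ : 4 * Ubar < m * δ := by rw [gt_iff_lt, div_lt_iff₀ hm] at hδ; linarith
    calc c * (4 * Ubar * θ.real univ) ≤ c * (4 * Ubar * 2) := by gcongr
      _ = 4 * Ubar / (m * δ) := by rw [hc_def]; field_simp
      _ < 1 := (div_lt_one (by positivity)).2 hmδ
  set S : Set C(Set.Icc (0:ℝ) 1, ℝ) := {f | ∀ x, f x ∈ Icc (U x) Ubar}
  have hS : ∀ f ∈ S, ∀ z, f z ∈ Icc 0 Ubar := fun f hf z => ⟨(hU0 z).trans (hf z).1, (hf z).2⟩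
  obtain ⟨Ψ, ⟨hΨ, hΨfix⟩, hΨuniq⟩ := existsUnique_isFixedPt_of_contracting_on
    (isClosed_setOf_forall_mem_Icc ⟨U, hU⟩ Ubar) (x₀ := ⟨U, hU⟩) (fun x => ⟨le_rfl, hU1 x⟩)
    (mapsTo_hjbOperator (fun x => ⟨hU0 x, hU1 x⟩) hc
      (by nlinarith [measureReal_nonneg (μ := θ) (s := univ)])) hK
    (fun f hf g hg => dist_hjbOperator_le _ hc hUbar (hS f hf) (hS g hg))
  refine ⟨Ψ, ⟨hS Ψ hΨ, fun x => (DFunLike.congr_fun hΨfix x).symm⟩, ?_⟩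
  rintro Φ ⟨hΦ, hΦeq⟩
  refine hΨuniq Φ ⟨fun x => ⟨?_, (hΦ x).2⟩, ContinuousMap.ext fun x => (hΦeq x).symm⟩
  exact (hΦeq x).symm ▸ le_hjbOperator_apply θ ⟨U, hU⟩ hc Φ x

theorem hjb_unique_solution
    (θ : Measure (Set.Icc (0:ℝ) 1)) [IsFiniteMeasure θ]
    (hθ : θ Set.univ ≤ 2)
    (U : (Set.Icc (0:ℝ) 1) → ℝ) (hU : Continuous U)
    (Ubar m δ : ℝ) (hUbar : 0 < Ubar) (hm : 0 < m)
    (hδ : δ > 4 * Ubar / m)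
    (hU0 : ∀ x, 0 ≤ U x) (hU1 : ∀ x, U x ≤ Ubar) :
    ∃! Ψ : C((Set.Icc (0:ℝ) 1), ℝ),
      (∀ x, 0 ≤ Ψ x ∧ Ψ x ≤ Ubar) ∧
      (∀ x, Ψ x = U x + (1 / (2 * m * δ)) * ∫ z, (max (Ψ z - Ψ x) 0) ^ 2 ∂θ) :=
  hjb_unique_solution_general θ hθ U hU Ubar m δ hm hδ hU0 hU1
end

section
/- Let U : Ω → ℝ be continuous with 0 ≤ U ≤ Ū on Ω = [0,1], and m, δ > 0. Then the function Ψ(x) = (δ/(δ+1))·U(x) + (m/δ)·ln( ∫_Ω exp( (δ/(δ+1))·U(z)/m ) dz ) satisfies the equation Ψ(x) = (δ/(δ+1))·U(x) + (m/(δ+1))·ln( ∫_Ω exp(Ψ(z)/m) dz ) for all x ∈ Ω. -/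
open MeasureTheory

theorem logit_hjb_closed_form
    (U : ℝ → ℝ) (hU : ContinuousOn U (Set.Icc (0:ℝ) 1))
    (Ubar m δ : ℝ) (hUbar : 0 < Ubar) (hm : 0 < m) (hδ : 0 < δ)
    (hU0 : ∀ x ∈ Set.Icc (0:ℝ) 1, 0 ≤ U x)
    (hU1 : ∀ x ∈ Set.Icc (0:ℝ) 1, U x ≤ Ubar) :
    ∀ x ∈ Set.Icc (0:ℝ) 1,
      (δ / (δ + 1)) * U x +
          (m / δ) * Real.log (∫ z in Set.Icc (0:ℝ) 1,
            Real.exp ((δ / (δ + 1)) * U z / m)) =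
        (δ / (δ + 1)) * U x +
          (m / (δ + 1)) * Real.log (∫ z in Set.Icc (0:ℝ) 1,
            Real.exp (((δ / (δ + 1)) * U z +
              (m / δ) * Real.log (∫ y in Set.Icc (0:ℝ) 1,
                Real.exp ((δ / (δ + 1)) * U y / m))) / m)) := by
  intro x hx
  set c : ℝ := δ / (δ + 1) with hc
  set I : ℝ := ∫ z in Set.Icc (0:ℝ) 1, Real.exp (c * U z / m) with hI
  have hδ1 : (0:ℝ) < δ + 1 := by linarith
  have hcont : ContinuousOn (fun z => Real.exp (c * U z / m)) (Set.Icc (0:ℝ) 1) :=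
    Real.continuous_exp.comp_continuousOn (((continuousOn_const.mul hU).div_const m))
  have hint : IntegrableOn (fun z => Real.exp (c * U z / m)) (Set.Icc (0:ℝ) 1) :=
    hcont.integrableOn_compact isCompact_Icc
  have hI1 : (1:ℝ) ≤ I := by
    have hmono : (∫ z in Set.Icc (0:ℝ) 1, (1:ℝ)) ≤ I := by
      apply setIntegral_mono_on (by simp) hint measurableSet_Icc
      intro z hz
      have : (0:ℝ) ≤ c * U z / m := by
        apply div_nonneg _ hm.le
        exact mul_nonneg (div_nonneg hδ.le hδ1.le) (hU0 z hz)
      simpa using Real.one_le_exp this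
    simpa using hmono
  have hIpos : (0:ℝ) < I := lt_of_lt_of_le one_pos hI1
  set K : ℝ := (m / δ) * Real.log I with hK
  have hinner : (∫ z in Set.Icc (0:ℝ) 1, Real.exp ((c * U z + K) / m))
      = I * Real.exp (K / m) := by
    have : ∀ z, Real.exp ((c * U z + K) / m)
        = Real.exp (c * U z / m) * Real.exp (K / m) := by
      intro z
      rw [← Real.exp_add, add_div]
    simp_rw [this]
    rw [integral_mul_const]
  rw [hinner, Real.log_mul hIpos.ne' (Real.exp_ne_zero _), Real.log_exp]
  have hKm : K / m = (1 / δ) * Real.log I := by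
    rw [hK]; field_simp
  rw [hKm]
  have hδ0 : δ ≠ 0 := hδ.ne'
  have hδ10 : δ + 1 ≠ 0 := hδ1.ne'
  congr 1
  have h1 : Real.log I + (1:ℝ)/δ * Real.log I = (δ+1)/δ * Real.log I := by
    field_simp
  rw [h1, ← mul_assoc, div_mul_div_comm, mul_comm m (δ+1), mul_div_mul_left m δ hδ10]
end

section
/- Let Ψ : Ω → ℝ be continuous on Ω = [0,1], m, δ > 0, and U continuous with 0 ≤ U ≤ Ū. Suppose Ψ satisfies Ψ(x) = (δ/(δ+1))·U(x) + (m/(δ+1))·ln( ∫_Ω exp(Ψ(z)/m) dz ) for all x. Then 0 ≤ Ψ ≤ Ū on Ω. -/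
open MeasureTheory

theorem logit_hjb_apriori_bound
    (U Ψ : ℝ → ℝ) (hU : ContinuousOn U (Set.Icc (0:ℝ) 1))
    (hΨ : ContinuousOn Ψ (Set.Icc (0:ℝ) 1))
    (Ubar m δ : ℝ) (hUbar : 0 < Ubar) (hm : 0 < m) (hδ : 0 < δ)
    (hU0 : ∀ x ∈ Set.Icc (0:ℝ) 1, 0 ≤ U x)
    (hU1 : ∀ x ∈ Set.Icc (0:ℝ) 1, U x ≤ Ubar)
    (heq : ∀ x ∈ Set.Icc (0:ℝ) 1,
      Ψ x = (δ / (δ + 1)) * U x +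
        (m / (δ + 1)) * Real.log (∫ z in Set.Icc (0:ℝ) 1, Real.exp (Ψ z / m))) :
    ∀ x ∈ Set.Icc (0:ℝ) 1, 0 ≤ Ψ x ∧ Ψ x ≤ Ubar := by
  have hδ1 : (0:ℝ) < δ + 1 := by linarith
  have hIcc : IsCompact (Set.Icc (0:ℝ) 1) := isCompact_Icc
  have hne : (Set.Icc (0:ℝ) 1).Nonempty := ⟨0, by norm_num⟩
  obtain ⟨a, ha, hmax⟩ := hIcc.exists_isMaxOn hne hΨ
  obtain ⟨b, hb, hmin⟩ := hIcc.exists_isMinOn hne hΨ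
  have hcont : ContinuousOn (fun z => Real.exp (Ψ z / m)) (Set.Icc (0:ℝ) 1) :=
    Real.continuous_exp.comp_continuousOn (hΨ.div_const m)
  have hint : IntegrableOn (fun z => Real.exp (Ψ z / m)) (Set.Icc (0:ℝ) 1) :=
    hcont.integrableOn_compact hIcc
  set I : ℝ := ∫ z in Set.Icc (0:ℝ) 1, Real.exp (Ψ z / m) with hI
  have hvol : (volume (Set.Icc (0:ℝ) 1)).toReal = 1 := by simp
  have hub : I ≤ Real.exp (Ψ a / m) := by
    calc I ≤ ∫ _z in Set.Icc (0:ℝ) 1, Real.exp (Ψ a / m) := by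
          apply setIntegral_mono_on hint (integrableOn_const (by simp) (by simp))
            measurableSet_Icc
          intro z hz
          exact Real.exp_le_exp.2 (div_le_div_of_nonneg_right (hmax hz) hm.le)
      _ = Real.exp (Ψ a / m) := by rw [setIntegral_const]; simp
  have hlb : Real.exp (Ψ b / m) ≤ I := by
    calc Real.exp (Ψ b / m)
        = ∫ _z in Set.Icc (0:ℝ) 1, Real.exp (Ψ b / m) := by
          rw [setIntegral_const]; simp
      _ ≤ I := by
          apply setIntegral_mono_on (integrableOn_const (by simp) (by simp)) hint
            measurableSet_Icc
          intro z hz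
          exact Real.exp_le_exp.2 (div_le_div_of_nonneg_right (hmin hz) hm.le)
  have hIpos : 0 < I := lt_of_lt_of_le (Real.exp_pos _) hlb
  have hLub : Real.log I ≤ Ψ a / m := by
    rw [← Real.log_exp (Ψ a / m)]
    exact Real.log_le_log hIpos hub
  have hLlb : Ψ b / m ≤ Real.log I := by
    rw [← Real.log_exp (Ψ b / m)]
    exact Real.log_le_log (Real.exp_pos _) hlb
  have hmLub : m * Real.log I ≤ Ψ a := by
    have := mul_le_mul_of_nonneg_left hLub hm.le
    rwa [mul_div_cancel₀ _ (ne_of_gt hm)] at this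
  have hmLlb : Ψ b ≤ m * Real.log I := by
    have := mul_le_mul_of_nonneg_left hLlb hm.le
    rwa [mul_div_cancel₀ _ (ne_of_gt hm)] at this
  have hea := heq a ha
  have heb := heq b hb
  have hUa := hU1 a ha
  have hUb := hU0 b hb
  -- (δ+1) Ψ a = δ U a + m log I ≤ δ Ubar + Ψ a  ⇒  Ψ a ≤ Ubar
  have hmaxbound : Ψ a ≤ Ubar := by
    have h1 : (δ + 1) * Ψ a = δ * U a + m * Real.log I := by
      field_simp at hea ⊢; linarith
    nlinarith
  have hminbound : 0 ≤ Ψ b := by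
    have h1 : (δ + 1) * Ψ b = δ * U b + m * Real.log I := by
      field_simp at heb ⊢; linarith
    nlinarith
  intro x hx
  exact ⟨le_trans hminbound (hmin hx), le_trans (hmax hx) hmaxbound⟩
end

section
/- Define B(Ψ)(x) = (δ/(δ+1))·U(x) + (m/(δ+1))·ln( ∫_Ω exp(Ψ(z)/m) dz ) on continuous functions Ψ : [0,1] → ℝ with 0 ≤ Ψ ≤ Ū. Then for any two such Ψ₁, Ψ₂, ‖B(Ψ₁) - B(Ψ₂)‖_∞ ≤ (1/(δ+1))·exp(Ū/m)·‖Ψ₁ - Ψ₂‖_∞. In particular, if δ > exp(Ū/m) - 1, then B is a strict contraction and the logit-type HJB equation Ψ = B(Ψ) has a unique solution with values in [0, Ū]. -/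
open MeasureTheory

lemma exp_lip' (s t c : ℝ) (hs : s ≤ c) (ht : t ≤ c) (hts : t ≤ s) :
    Real.exp s - Real.exp t ≤ Real.exp c * (s - t) := by
  have h1 : Real.exp s * (1 + (t - s)) ≤ Real.exp t := by
    have h := Real.add_one_le_exp (t - s)
    calc Real.exp s * (1 + (t - s)) ≤ Real.exp s * Real.exp (t - s) := by
          nlinarith [Real.exp_pos s]
      _ = Real.exp t := by rw [← Real.exp_add]; ring_nf
  nlinarith [Real.exp_le_exp.2 hs, Real.exp_pos s]

lemma exp_lip (s t c : ℝ) (hs : s ≤ c) (ht : t ≤ c) :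
    |Real.exp s - Real.exp t| ≤ Real.exp c * |s - t| := by
  rcases le_total t s with h | h
  · rw [abs_of_nonneg (sub_nonneg.2 (Real.exp_le_exp.2 h)), abs_of_nonneg (sub_nonneg.2 h)]
    exact exp_lip' s t c hs ht h
  · rw [abs_sub_comm, abs_sub_comm s t,
      abs_of_nonneg (sub_nonneg.2 (Real.exp_le_exp.2 h)), abs_of_nonneg (sub_nonneg.2 h)]
    exact exp_lip' t s c ht hs h

lemma log_lip' (a b : ℝ) (ha : 1 ≤ a) (hb : 1 ≤ b) (hba : b ≤ a) :
    Real.log a - Real.log b ≤ a - b := by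
  have hb0 : 0 < b := by linarith
  have ha0 : 0 < a := by linarith
  have h := Real.log_le_sub_one_of_pos (show 0 < a / b by positivity)
  rw [Real.log_div (by linarith) (by linarith)] at h
  have : a / b ≤ 1 + (a - b) := by
    rw [div_le_iff₀ hb0]; nlinarith
  linarith

lemma log_lip (a b : ℝ) (ha : 1 ≤ a) (hb : 1 ≤ b) :
    |Real.log a - Real.log b| ≤ |a - b| := by
  rcases le_total b a with h | h
  · rw [abs_of_nonneg (sub_nonneg.2 (Real.log_le_log (by linarith) h)),
      abs_of_nonneg (sub_nonneg.2 h)]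
    exact log_lip' a b ha hb h
  · rw [abs_sub_comm, abs_sub_comm a b,
      abs_of_nonneg (sub_nonneg.2 (Real.log_le_log (by linarith) h)),
      abs_of_nonneg (sub_nonneg.2 h)]
    exact log_lip' b a hb ha h

section Int
variable (m : ℝ)

lemma cont_int (f : (Set.Icc (0:ℝ) 1) → ℝ) (hf : Continuous f) :
    Integrable (fun z => Real.exp (f z / m)) := by
  exact (Real.continuous_exp.comp (hf.div_const m)).integrable_of_hasCompactSupport
    (HasCompactSupport.of_compactSpace _)

lemma one_le_int (hm : 0 < m) (f : (Set.Icc (0:ℝ) 1) → ℝ) (hf : Continuous f) (h0 : ∀ x, 0 ≤ f x) :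
    1 ≤ ∫ z, Real.exp (f z / m) := by
  have : (1:ℝ) = ∫ _z : (Set.Icc (0:ℝ) 1), (1:ℝ) := by simp
  nth_rewrite 1 [this]
  exact integral_mono (integrable_const 1) (cont_int m f hf)
    (fun z => Real.one_le_exp (div_nonneg (h0 z) hm.le))

lemma int_le (hm : 0 < m) (f : (Set.Icc (0:ℝ) 1) → ℝ) (hf : Continuous f) (C : ℝ) (h1 : ∀ x, f x ≤ C) :
    (∫ z, Real.exp (f z / m)) ≤ Real.exp (C / m) := by
  have : Real.exp (C / m) = ∫ _z : (Set.Icc (0:ℝ) 1), Real.exp (C / m) := by simp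
  nth_rewrite 1 [this]
  exact integral_mono (cont_int m f hf) (integrable_const _)
    (fun z => Real.exp_le_exp.2 ((div_le_div_iff_of_pos_right hm).2 (h1 z)))
end Int
theorem logit_hjb_contraction_and_unique
    (U : (Set.Icc (0:ℝ) 1) → ℝ) (hU : Continuous U)
    (Ubar m δ : ℝ) (hUbar : 0 < Ubar) (hm : 0 < m) (hδ : 0 < δ)
    (hU0 : ∀ x, 0 ≤ U x) (hU1 : ∀ x, U x ≤ Ubar) :
    (∀ Ψ₁ Ψ₂ : (Set.Icc (0:ℝ) 1) → ℝ, Continuous Ψ₁ → Continuous Ψ₂ →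
      (∀ x, 0 ≤ Ψ₁ x) → (∀ x, Ψ₁ x ≤ Ubar) →
      (∀ x, 0 ≤ Ψ₂ x) → (∀ x, Ψ₂ x ≤ Ubar) →
      ∀ x, |((δ / (δ + 1)) * U x +
              (m / (δ + 1)) * Real.log (∫ z, Real.exp (Ψ₁ z / m))) -
            ((δ / (δ + 1)) * U x +
              (m / (δ + 1)) * Real.log (∫ z, Real.exp (Ψ₂ z / m)))| ≤
        (1 / (δ + 1)) * Real.exp (Ubar / m) * ⨆ y, |Ψ₁ y - Ψ₂ y|) ∧
    (δ > Real.exp (Ubar / m) - 1 →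
      ∃! Ψ : C((Set.Icc (0:ℝ) 1), ℝ),
        (∀ x, 0 ≤ Ψ x ∧ Ψ x ≤ Ubar) ∧
        (∀ x, Ψ x = (δ / (δ + 1)) * U x +
          (m / (δ + 1)) * Real.log (∫ z, Real.exp (Ψ z / m)))) := by
  have hδ1 : (0:ℝ) < δ + 1 := by linarith
  constructor
  · -- Part 1: Lipschitz estimate
    intro Ψ₁ Ψ₂ hc1 hc2 h10 h11 h20 h21 x
    set a := ∫ z, Real.exp (Ψ₁ z / m) with ha
    set b := ∫ z, Real.exp (Ψ₂ z / m) with hb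
    have int1 := cont_int m Ψ₁ hc1
    have int2 := cont_int m Ψ₂ hc2
    have ha1 : 1 ≤ a := one_le_int m hm Ψ₁ hc1 h10
    have hb1 : 1 ≤ b := one_le_int m hm Ψ₂ hc2 h20
    set S := ⨆ y, |Ψ₁ y - Ψ₂ y| with hS
    have hbdd : BddAbove (Set.range fun y => |Ψ₁ y - Ψ₂ y|) := by
      refine ⟨Ubar, ?_⟩
      rintro _ ⟨y, rfl⟩
      have := h11 y; have := h10 y; have := h21 y; have := h20 y
      rw [abs_sub_le_iff]; constructor <;> linarith
    have hSz : ∀ z, |Ψ₁ z - Ψ₂ z| ≤ S := fun z => le_ciSup hbdd z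
    have hS0 : 0 ≤ S := le_trans (abs_nonneg _)
      (hSz ⟨0, Set.left_mem_Icc.2 (by norm_num)⟩)
    -- |a - b| ≤ exp(Ubar/m) * (S/m)
    have hab : |a - b| ≤ Real.exp (Ubar / m) * (S / m) := by
      have hsub : a - b = ∫ z, (Real.exp (Ψ₁ z / m) - Real.exp (Ψ₂ z / m)) :=
        (integral_sub int1 int2).symm
      rw [hsub]
      calc |∫ z, (Real.exp (Ψ₁ z / m) - Real.exp (Ψ₂ z / m))|
          ≤ ∫ z, |Real.exp (Ψ₁ z / m) - Real.exp (Ψ₂ z / m)| :=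
            by simpa [Real.norm_eq_abs] using
              norm_integral_le_integral_norm (fun z => Real.exp (Ψ₁ z / m) - Real.exp (Ψ₂ z / m))
        _ ≤ ∫ _z : (Set.Icc (0:ℝ) 1), Real.exp (Ubar / m) * (S / m) := by
            refine integral_mono (int1.sub int2).abs (integrable_const _) (fun z => ?_)
            calc |Real.exp (Ψ₁ z / m) - Real.exp (Ψ₂ z / m)|
                ≤ Real.exp (Ubar / m) * |Ψ₁ z / m - Ψ₂ z / m| :=
                  exp_lip _ _ _ ((div_le_div_iff_of_pos_right hm).2 (h11 z))
                    ((div_le_div_iff_of_pos_right hm).2 (h21 z))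
              _ = Real.exp (Ubar / m) * (|Ψ₁ z - Ψ₂ z| / m) := by
                  rw [div_sub_div_same, abs_div, abs_of_pos hm]
              _ ≤ Real.exp (Ubar / m) * (S / m) := by
                  have := hSz z
                  gcongr
        _ = Real.exp (Ubar / m) * (S / m) := by simp
    have hlog : |Real.log a - Real.log b| ≤ |a - b| := log_lip a b ha1 hb1
    have key : ((δ / (δ + 1)) * U x + (m / (δ + 1)) * Real.log a) -
        ((δ / (δ + 1)) * U x + (m / (δ + 1)) * Real.log b)
        = (m / (δ + 1)) * (Real.log a - Real.log b) := by ring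
    rw [key, abs_mul, abs_of_pos (by positivity : (0:ℝ) < m / (δ + 1))]
    calc m / (δ + 1) * |Real.log a - Real.log b|
        ≤ m / (δ + 1) * (Real.exp (Ubar / m) * (S / m)) := by
          have := le_trans hlog hab
          gcongr
      _ = 1 / (δ + 1) * Real.exp (Ubar / m) * S := by
          field_simp
  · -- Part 2: unique fixed point
    intro _
    set A : ℝ := δ / (δ + 1) with hA
    have hA0 : 0 ≤ A := by positivity
    have hAU : Continuous (fun x => A * U x) := continuous_const.mul hU
    set I : ℝ := ∫ z, Real.exp (A * U z / m) with hI
    have hI1 : 1 ≤ I := one_le_int m hm _ hAU (fun x => mul_nonneg hA0 (hU0 x))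
    have hIub : I ≤ Real.exp (A * Ubar / m) :=
      int_le m hm _ hAU (A * Ubar) (fun x => by
        have := hU1 x; nlinarith)
    set K : ℝ := Real.log I with hK
    have hK0 : 0 ≤ K := Real.log_nonneg hI1
    have hKub : K ≤ A * Ubar / m := by
      calc K ≤ Real.log (Real.exp (A * Ubar / m)) :=
            Real.log_le_log (by linarith) hIub
        _ = A * Ubar / m := Real.log_exp _
    set c : ℝ := m * K / δ with hc
    have hc0 : 0 ≤ c := by positivity
    have hcub : c ≤ A * Ubar / δ := by
      rw [hc]
      rw [div_le_div_iff_of_pos_right hδ]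
      calc m * K ≤ m * (A * Ubar / m) := by gcongr
        _ = A * Ubar := by field_simp
    -- the key integral identity, for any shift c'
    have hshift : ∀ c' : ℝ,
        (∫ z, Real.exp ((A * U z + c') / m)) = Real.exp (c' / m) * I := by
      intro c'
      rw [hI, ← integral_const_mul]
      congr 1; funext z
      rw [← Real.exp_add, ← add_div]; ring_nf
    have hlogshift : ∀ c' : ℝ,
        Real.log (∫ z, Real.exp ((A * U z + c') / m)) = c' / m + K := by
      intro c'
      rw [hshift c', Real.log_mul (Real.exp_ne_zero _) (by linarith), Real.log_exp, hK]
    refine ⟨ContinuousMap.mk (fun x => A * U x + c) (by continuity), ⟨?_, ?_⟩, ?_⟩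
    · intro x
      constructor
      · show (0:ℝ) ≤ A * U x + c
        exact add_nonneg (mul_nonneg hA0 (hU0 x)) hc0
      · show A * U x + c ≤ Ubar
        have h1 : A * U x ≤ A * Ubar := by have := hU1 x; gcongr
        have h2 : A * Ubar + A * Ubar / δ = Ubar := by
          rw [hA]; field_simp
        linarith [hcub]
    · intro x
      simp only [ContinuousMap.coe_mk]
      rw [hlogshift c]
      rw [hc]
      field_simp
      ring
    · rintro Ψ' ⟨_, hfix⟩
      obtain ⟨c', hc'⟩ : ∃ c', c' = (m / (δ + 1)) * Real.log (∫ z, Real.exp (Ψ' z / m)) :=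
        ⟨_, rfl⟩
      have hform : ∀ x, Ψ' x = A * U x + c' := fun x => by rw [hfix x, ← hc']
      have hint : (∫ z, Real.exp (Ψ' z / m)) = ∫ z, Real.exp ((A * U z + c') / m) := by
        congr 1; funext z; rw [hform z]
      have heq : c' = (m / (δ + 1)) * (c' / m + K) := by
        conv_lhs => rw [hc']
        rw [hint, hlogshift c']
      have heq2 : m / (δ + 1) * (c' / m + K) = (c' + m * K) / (δ + 1) := by
        field_simp
      have heq3 : c' * (δ + 1) = c' + m * K := by
        rw [heq2] at heq
        field_simp at heq
        linarith [heq]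
      have hceq : c' = c := by
        rw [hc, eq_div_iff (ne_of_gt hδ)]
        ring_nf at heq3 ⊢
        linarith [heq3]
      ext x
      simp only [ContinuousMap.coe_mk]
      rw [hform x, hceq]
end

section
/- Let W₁, W₂ : [0,1] → ℝ be bounded measurable with 0 ≤ Wᵢ ≤ W̄, and let p_i(y) = exp(Wᵢ(y)/m)/∫₀¹ exp(Wᵢ(z)/m) dz for m > 0. Then ∫₀¹ |p₁(z) - p₂(z)| dz ≤ (2/m)·exp(2W̄/m)·‖W₁ - W₂‖_∞. -/
open MeasureTheory

lemma exp_lip_aux {x y c : ℝ} (hx : x ≤ c) (hy : y ≤ c) :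
    |Real.exp x - Real.exp y| ≤ Real.exp c * |x - y| := by
  wlog h : y ≤ x generalizing x y
  · rw [abs_sub_comm, abs_sub_comm x y]; exact this hy hx (le_of_not_ge h)
  rw [abs_of_nonneg (sub_nonneg.2 (Real.exp_le_exp.2 h)), abs_of_nonneg (sub_nonneg.2 h)]
  have h1 : (y - x) + 1 ≤ Real.exp (y - x) := Real.add_one_le_exp _
  have h2 : Real.exp (y - x) * Real.exp x = Real.exp y := by
    rw [← Real.exp_add]; ring_nf
  have h3 : Real.exp x ≤ Real.exp c := Real.exp_le_exp.2 hx
  nlinarith [Real.exp_pos x, Real.exp_pos c]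

theorem gibbs_density_L1_stability
    (W₁ W₂ : ℝ → ℝ) (hW₁ : Measurable W₁) (hW₂ : Measurable W₂)
    (Wbar : ℝ)
    (h10 : ∀ z ∈ Set.Icc (0:ℝ) 1, 0 ≤ W₁ z) (h11 : ∀ z ∈ Set.Icc (0:ℝ) 1, W₁ z ≤ Wbar)
    (h20 : ∀ z ∈ Set.Icc (0:ℝ) 1, 0 ≤ W₂ z) (h21 : ∀ z ∈ Set.Icc (0:ℝ) 1, W₂ z ≤ Wbar)
    (m : ℝ) (hm : 0 < m) :
    ∫ z in Set.Icc (0:ℝ) 1,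
        |Real.exp (W₁ z / m) / (∫ y in Set.Icc (0:ℝ) 1, Real.exp (W₁ y / m)) -
          Real.exp (W₂ z / m) / (∫ y in Set.Icc (0:ℝ) 1, Real.exp (W₂ y / m))| ≤
      (2 / m) * Real.exp (2 * Wbar / m) *
        ⨆ z : Set.Icc (0:ℝ) 1, |W₁ z - W₂ z| := by
  set I : Set ℝ := Set.Icc (0:ℝ) 1 with hI
  have h0mem : (0:ℝ) ∈ I := ⟨le_refl 0, zero_le_one⟩
  have hWbar : 0 ≤ Wbar := le_trans (h10 0 h0mem) (h11 0 h0mem)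
  set a : ℝ → ℝ := fun z => Real.exp (W₁ z / m) with ha_def
  set b : ℝ → ℝ := fun z => Real.exp (W₂ z / m) with hb_def
  have ha : Measurable a := (hW₁.div_const m).exp
  have hb : Measurable b := (hW₂.div_const m).exp
  -- pointwise bounds on a, b
  have ha_lb : ∀ z ∈ I, 1 ≤ a z := fun z hz => by
    rw [ha_def]; simpa using Real.one_le_exp (div_nonneg (h10 z hz) hm.le)
  have hb_lb : ∀ z ∈ I, 1 ≤ b z := fun z hz => by
    rw [hb_def]; simpa using Real.one_le_exp (div_nonneg (h20 z hz) hm.le)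
  have ha_ub : ∀ z ∈ I, a z ≤ Real.exp (Wbar / m) := fun z hz =>
    Real.exp_le_exp.2 (by gcongr ?_ / m; exact h11 z hz)
  have hb_ub : ∀ z ∈ I, b z ≤ Real.exp (Wbar / m) := fun z hz =>
    Real.exp_le_exp.2 (by gcongr ?_ / m; exact h21 z hz)
  -- integrability
  have hIfin : volume I ≠ ⊤ := by
    rw [hI, Real.volume_Icc]; simp
  have hint_a : IntegrableOn a I := by
    apply Measure.integrableOn_of_bounded hIfin ha.aestronglyMeasurable
      (M := Real.exp (Wbar / m))
    filter_upwards [ae_restrict_mem measurableSet_Icc] with z hz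
    rw [Real.norm_eq_abs, abs_of_pos (Real.exp_pos _)]
    exact ha_ub z hz
  have hint_b : IntegrableOn b I := by
    apply Measure.integrableOn_of_bounded hIfin hb.aestronglyMeasurable
      (M := Real.exp (Wbar / m))
    filter_upwards [ae_restrict_mem measurableSet_Icc] with z hz
    rw [Real.norm_eq_abs, abs_of_pos (Real.exp_pos _)]
    exact hb_ub z hz
  set A : ℝ := ∫ y in I, a y with hA_def
  set B : ℝ := ∫ y in I, b y with hB_def
  have hone : (∫ _ in I, (1:ℝ)) = 1 := by
    rw [setIntegral_const, hI, measureReal_def, Real.volume_Icc]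
    simp
  have hA1 : 1 ≤ A := by
    rw [← hone, hA_def]
    exact setIntegral_mono_on (integrableOn_const hIfin) hint_a
      measurableSet_Icc ha_lb
  have hB1 : 1 ≤ B := by
    rw [← hone, hB_def]
    exact setIntegral_mono_on (integrableOn_const hIfin) hint_b
      measurableSet_Icc hb_lb
  have hApos : 0 < A := lt_of_lt_of_le zero_lt_one hA1
  have hBpos : 0 < B := lt_of_lt_of_le zero_lt_one hB1
  -- the sup
  set S : ℝ := ⨆ z : I, |W₁ z - W₂ z| with hS_def
  have hbdd : BddAbove (Set.range fun z : I => |W₁ z - W₂ z|) := by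
    refine ⟨Wbar, Set.forall_mem_range.2 fun z => ?_⟩
    have h1 := h10 z z.2; have h2 := h11 z z.2
    have h3 := h20 z z.2; have h4 := h21 z z.2
    rw [abs_sub_le_iff]; constructor <;> linarith
  have hS : ∀ z ∈ I, |W₁ z - W₂ z| ≤ S := fun z hz => le_ciSup hbdd ⟨z, hz⟩
  have hS0 : 0 ≤ S := le_trans (abs_nonneg _) (hS 0 h0mem)
  set K : ℝ := Real.exp (Wbar / m) / m * S with hK_def
  have hK0 : 0 ≤ K := mul_nonneg (div_nonneg (Real.exp_pos _).le hm.le) hS0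
  -- pointwise bound on |a - b|
  have hab : ∀ z ∈ I, |a z - b z| ≤ K := by
    intro z hz
    have h1 : W₁ z / m ≤ Wbar / m := by gcongr ?_ / m; exact h11 z hz
    have h2 : W₂ z / m ≤ Wbar / m := by gcongr ?_ / m; exact h21 z hz
    have := exp_lip_aux h1 h2
    have heq : |W₁ z / m - W₂ z / m| = |W₁ z - W₂ z| / m := by
      rw [div_sub_div_same, abs_div, abs_of_pos hm]
    rw [heq] at this
    calc |a z - b z| ≤ Real.exp (Wbar / m) * (|W₁ z - W₂ z| / m) := this
      _ ≤ Real.exp (Wbar / m) * (S / m) := by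
          gcongr; exact hS z hz
      _ = K := by rw [hK_def]; ring
  -- integral bound on |a - b|
  have hint_ab : IntegrableOn (fun z => |a z - b z|) I := (hint_a.sub hint_b).abs
  have habint : (∫ z in I, |a z - b z|) ≤ K := by
    calc (∫ z in I, |a z - b z|) ≤ ∫ _ in I, K :=
          setIntegral_mono_on hint_ab (integrableOn_const hIfin)
            measurableSet_Icc hab
      _ = K := by rw [setIntegral_const, hI, measureReal_def, Real.volume_Icc]; simp
  have hABdiff : |B - A| ≤ K := by
    have : B - A = ∫ z in I, (b z - a z) := by
      rw [integral_sub hint_b hint_a]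
    rw [this]
    calc |∫ z in I, (b z - a z)| ≤ ∫ z in I, |b z - a z| := by
          simpa [Real.norm_eq_abs] using
            norm_integral_le_integral_norm (μ := volume.restrict I) (fun z => b z - a z)
      _ = ∫ z in I, |a z - b z| := by
          congr 1; ext z; rw [abs_sub_comm]
      _ ≤ K := habint
  -- pointwise bound on p-diff
  have hpt : ∀ z ∈ I, |a z / A - b z / B| ≤ |a z - b z| / A + b z * (|B - A| / (A * B)) := by
    intro z hz
    have key : a z / A - b z / B = (a z - b z) / A + b z * ((B - A) / (A * B)) := by
      field_simp; ring
    rw [key]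
    calc |((a z - b z) / A) + b z * ((B - A) / (A * B))|
        ≤ |(a z - b z) / A| + |b z * ((B - A) / (A * B))| := abs_add_le _ _
      _ = |a z - b z| / A + b z * (|B - A| / (A * B)) := by
          rw [abs_div, abs_of_pos hApos, abs_mul, abs_of_pos (Real.exp_pos _),
            abs_div, abs_of_pos (mul_pos hApos hBpos)]
  -- integrability of the RHS and LHS
  have hint_rhs : IntegrableOn (fun z => |a z - b z| / A + b z * (|B - A| / (A * B))) I :=
    (hint_ab.div_const A).add (hint_b.mul_const _)
  have hint_lhs : IntegrableOn (fun z => |a z / A - b z / B|) I :=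
    ((hint_a.div_const A).sub (hint_b.div_const B)).abs
  calc (∫ z in I, |a z / A - b z / B|)
      ≤ ∫ z in I, (|a z - b z| / A + b z * (|B - A| / (A * B))) :=
        setIntegral_mono_on hint_lhs hint_rhs measurableSet_Icc hpt
    _ = (∫ z in I, |a z - b z|) / A + B * (|B - A| / (A * B)) := by
        rw [integral_add (hint_ab.div_const A) (hint_b.mul_const _), integral_div,
          integral_mul_const]
    _ ≤ K / A + B * (|B - A| / (A * B)) := by gcongr
    _ = K / A + |B - A| / A := by
        field_simp
    _ ≤ K / 1 + K / 1 := by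
        gcongr
    _ = 2 * K := by ring
    _ ≤ (2 / m) * Real.exp (2 * Wbar / m) * S := by
        rw [hK_def]
        have hexp : Real.exp (Wbar / m) ≤ Real.exp (2 * Wbar / m) := by
          apply Real.exp_le_exp.2
          gcongr ?_ / m
          linarith
        calc 2 * (Real.exp (Wbar / m) / m * S)
            ≤ 2 * (Real.exp (2 * Wbar / m) / m * S) := by gcongr
          _ = (2 / m) * Real.exp (2 * Wbar / m) * S := by ring
end
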